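/- If L : C → D is a localization functor (D is the localization of C at a class of morphisms W), then L is both final and initial: for every d ∈ D, the comma categories d ↓ L and L ↓ d are connected. -/

import Mathlib

/-!
Fix `d : D`. Sending `f : d ⟶ L.obj X` to the connected component of `StructuredArrow.mk f` is a
cocone under `L ⋙ coyoneda.obj (op d)`, i.e. a natural transformation from it to a constant
functor `L ⋙ const K`. Since whiskering with a localization functor is full, this transformation
is natural on all of `D`, so the component of `f ≫ g` does not depend on `g : L.obj X ⟶ L.obj Y`.
As `L` is essentially surjective, every object of `d ↓ L` is thus connected to `d ≅ L.obj c`.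
Initiality is the dual statement, `L.op` being a localization functor for `W.op`.
-/

open CategoryTheory

namespace CategoryTheory.Localization

variable {C : Type u₁} [Category.{v₁} C] {D : Type u₂} [Category.{v₂} D] (L : C ⥤ D)

lemma map_comp_eq_of_forall_map_map_comp_eq (W : MorphismProperty C) [L.IsLocalization W]
    {E : Type*} [Category* E] (G : D ⥤ E) {K : E} (φ : ∀ X : C, G.obj (L.obj X) ⟶ K)
    (hφ : ∀ ⦃X Y : C⦄ (f : X ⟶ Y), G.map (L.map f) ≫ φ Y = φ X)
    {X Y : C} (g : L.obj X ⟶ L.obj Y) : G.map g ≫ φ Y = φ X := by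
  let α : L ⋙ G ⟶ L ⋙ (Functor.const D).obj K :=
    { app := φ
      naturality := fun _ _ f => by simpa using hφ f }
  let β := (whiskeringLeftFunctor' L W E).preimage α
  have hβ (Z : C) : β.app (L.obj Z) = φ Z :=
    congr_app ((whiskeringLeftFunctor' L W E).map_preimage α) Z
  rw [← hβ, ← hβ, β.naturality]
  simp

lemma zigzag_structuredArrow_mk_comp (W : MorphismProperty C) [L.IsLocalization W]
    {d : D} {X Y : C} (f : d ⟶ L.obj X) (g : L.obj X ⟶ L.obj Y) :
    Zigzag (StructuredArrow.mk f) (StructuredArrow.mk (f ≫ g)) := by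
  let G := coyoneda.obj (Opposite.op d) ⋙ uliftFunctor.{u₁}
  let φ (Z : C) : G.obj (L.obj Z) ⟶ ConnectedComponents (StructuredArrow d L) :=
    ↾fun x => Quotient.mk'' (StructuredArrow.mk x.down)
  have hφ ⦃Z Z' : C⦄ (h : Z ⟶ Z') : G.map (L.map h) ≫ φ Z' = φ Z := by
    ext x
    exact _root_.Quotient.sound
      (Zigzag.of_inv (StructuredArrow.homMk (f := .mk x.down) (f' := .mk (x.down ≫ L.map h)) h))
  have := ConcreteCategory.congr_hom (map_comp_eq_of_forall_map_map_comp_eq L W G φ hφ g) ⟨f⟩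
  exact (Quotient.exact this).symm

lemma isConnected_structuredArrow (W : MorphismProperty C) [L.IsLocalization W] (d : D) :
    IsConnected (StructuredArrow d L) := by
  have : L.EssSurj := essSurj L W
  let e := L.objObjPreimageIso d
  have : Nonempty (StructuredArrow d L) := ⟨.mk e.inv⟩
  have h (j : StructuredArrow d L) : Zigzag (StructuredArrow.mk e.inv) j := by
    rw [j.eq_mk, ← e.inv_hom_id_assoc j.hom]
    exact zigzag_structuredArrow_mk_comp L W e.inv (e.hom ≫ j.hom)
  exact zigzag_isConnected fun j₁ j₂ => (h j₁).symm.trans (h j₂)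

lemma final (W : MorphismProperty C) [L.IsLocalization W] : L.Final :=
  ⟨isConnected_structuredArrow L W⟩

lemma initial (W : MorphismProperty C) [L.IsLocalization W] : L.Initial :=
  have : L.op.Final := final L.op W.op
  Functor.initial_of_final_op L

end CategoryTheory.Localization

/-- A localization functor `L : C ⥤ C[W⁻¹]` is both final and initial: all the comma
categories `d ↓ L` and `L ↓ d` are connected (and nonempty). -/
theorem localization_final_and_initial {C : Type u₁} [Category.{v₁} C]
    {D : Type u₂} [Category.{v₂} D] (L : C ⥤ D) (W : MorphismProperty C)
    [L.IsLocalization W] :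
    L.Final ∧ L.Initial :=
  ⟨Localization.final L W, Localization.initial L W⟩
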